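/- arXiv:1012.1482 — 5 statements merged into one kernel-verified Lean document; each statement's English description precedes it below -/
import Mathlib

section
/- For a ≥ 0 and d ≥ 1, the (d+1)×(d+1) determinant D_{a,d} = det[(a+i+j)!]_{0≤i,j≤d} satisfies D_{a,d} = a!·d!·D_{a+1,d-1}. -/
open Nat Matrix

namespace Matrix

variable {R : Type*} [CommRing R]

theorem det_succ_of_row_zero_succ_eq_zero {n : ℕ} (A : Matrix (Fin (n + 1)) (Fin (n + 1)) R)
    (hA : ∀ j : Fin n, A 0 j.succ = 0) :
    A.det = A 0 0 * (A.submatrix Fin.succ Fin.succ).det := by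
  simp [det_succ_row_zero A, Fin.sum_univ_succ, hA]

end Matrix

section

variable (R : Type*) [CommRing R]

def hankelFactorial (a n : ℕ) : Matrix (Fin n) (Fin n) R :=
  of fun i j => ((a + i + j)! : R)

/-- The matrix left by subtracting `a + j + 1` times column `j` of `hankelFactorial R a (d + 1)`
from column `j + 1`: since `(m + 1)! - (a + j + 1) * m! = i * m!` for `m = a + i + j`,
column `j + 1` becomes `i * (a + i + j)!`. -/
def hankelFactorialReduced (a d : ℕ) : Matrix (Fin (d + 1)) (Fin (d + 1)) R :=
  of fun i j => Fin.cases ((a + i)! : R) (fun j' : Fin d => (i : R) * (a + i + j')!) j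

variable {R}

theorem det_hankelFactorial_eq_det_reduced (a d : ℕ) :
    (hankelFactorial R a (d + 1)).det = (hankelFactorialReduced R a d).det := by
  refine det_eq_of_forall_col_eq_smul_add_pred (fun j => (a + j + 1 : R))
    (by simp [hankelFactorial, hankelFactorialReduced]) fun i j => ?_
  simp only [hankelFactorial, hankelFactorialReduced, of_apply, Fin.cases_succ, Fin.val_succ,
    Fin.val_castSucc]
  rw [← add_assoc, factorial_succ]
  push_cast
  ring

theorem det_hankelFactorialReduced (a d : ℕ) :
    (hankelFactorialReduced R a d).det = (a ! : R) * d ! * (hankelFactorial R (a + 1) d).det := by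
  have hsub : (hankelFactorialReduced R a d).submatrix Fin.succ Fin.succ =
      of fun i j : Fin d => ((i : R) + 1) * hankelFactorial R (a + 1) d i j := by
    ext i j
    simp only [hankelFactorial, hankelFactorialReduced, submatrix_apply, of_apply, Fin.cases_succ,
      Fin.val_succ]
    push_cast
    ring_nf
  rw [det_succ_of_row_zero_succ_eq_zero _ (by simp [hankelFactorialReduced]), hsub,
    det_mul_column, Fin.prod_univ_eq_prod_range (fun i => (i : R) + 1) d]
  simp [hankelFactorialReduced, ← Finset.prod_range_add_one_eq_factorial, mul_assoc]

end

theorem hankel_factorial_det_step_general (a d : ℕ) :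
    Matrix.det (Matrix.of fun i j : Fin (d + 1) => ((a + i + j)! : ℝ)) =
      (a ! : ℝ) * d ! *
        Matrix.det (Matrix.of fun i j : Fin d => ((a + 1 + i + j)! : ℝ)) :=
  (det_hankelFactorial_eq_det_reduced a d).trans (det_hankelFactorialReduced a d)

/-- For `a ≥ 0` and `d ≥ 1`, the `(d+1)×(d+1)` Hankel determinant
`D_{a,d} = det[(a+i+j)!]` satisfies `D_{a,d} = a! * d! * D_{a+1,d-1}`. -/
theorem hankel_factorial_det_step (a d : ℕ) (hd : 1 ≤ d) :
    Matrix.det (Matrix.of fun i j : Fin (d + 1) => ((a + i + j)! : ℝ)) =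
      (a ! : ℝ) * d ! *
        Matrix.det (Matrix.of fun i j : Fin d => ((a + 1 + i + j)! : ℝ)) :=
  hankel_factorial_det_step_general a d
end

section
/- The determinant of the (d+1)×(d+1) matrix with (i,j)-entry (a+i+j)! equals a!·(a+1)!···(a+d)!·d!·(d-1)!···2!·1!. In particular it is strictly positive. -/
/-!
The entry `(a + i + j)!` is `(a + i)!` times the monic degree-`j` polynomial
`(X + a + 1)(X + a + 2)⋯(X + a + j)` evaluated at `i`. Pulling the factor `(a + i)!` out of
row `i` and reducing the monic polynomials to monomials by column operations leaves the Vandermonde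
determinant of `0, 1, …, d`, which is `1! 2! ⋯ d!`.
-/

open Nat Matrix Finset Polynomial

variable {R : Type*} [CommRing R]

theorem det_of_mul_eval_eq_prod_mul_det_vandermonde {n : ℕ} (v x : Fin n → R)
    (p : Fin n → R[X]) (h_deg : ∀ j, (p j).natDegree = j) (h_monic : ∀ j, (p j).Monic) :
    det (of fun i j => v i * (p j).eval (x i)) = (∏ i, v i) * det (vandermonde x) := by
  rw [det_eval_matrixOfPolynomials_eq_det_vandermonde x p h_deg h_monic]
  exact det_mul_column v _

theorem factorial_add_eq_factorial_mul_eval_ascPochhammer_comp (a i j : ℕ) :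
    ((a + i + j)! : R) =
      (a + i)! * ((ascPochhammer R j).comp (X + C ((a : R) + 1))).eval (i : R) := by
  rw [eval_comp, eval_add, eval_X, eval_C, ← factorial_mul_ascPochhammer R (a + i) j]
  push_cast
  ring_nf

theorem det_of_factorial_add_add [IsDomain R] (a n : ℕ) :
    det (of fun i j : Fin (n + 1) => ((a + i + j)! : R)) =
      (∏ i : Fin (n + 1), ((a + i)! : R)) * n.superFactorial := by
  let p : Fin (n + 1) → R[X] := fun j => (ascPochhammer R j).comp (X + C ((a : R) + 1))
  have h_deg (j : Fin (n + 1)) : (p j).natDegree = j := by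
    rw [natDegree_comp, ascPochhammer_natDegree, natDegree_X_add_C, mul_one]
  have h_monic (j : Fin (n + 1)) : (p j).Monic := (monic_ascPochhammer R j).comp_X_add_C _
  simp_rw [factorial_add_eq_factorial_mul_eval_ascPochhammer_comp (R := R) a]
  rw [det_of_mul_eval_eq_prod_mul_det_vandermonde _ _ p h_deg h_monic,
    det_vandermonde_id_eq_superFactorial]

/-- The determinant of the `(d+1)×(d+1)` matrix with `(i,j)`-entry `(a+i+j)!` equals
`a!(a+1)!⋯(a+d)! · d!(d-1)!⋯2!1!`, and in particular it is strictly positive. -/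
theorem hankel_factorial_det_eq (a d : ℕ) :
    Matrix.det (Matrix.of fun i j : Fin (d + 1) => ((a + i + j)! : ℝ)) =
      (∏ i ∈ Finset.range (d + 1), ((a + i)! : ℝ)) *
        (∏ i ∈ Finset.range (d + 1), (i ! : ℝ)) ∧
    0 < Matrix.det (Matrix.of fun i j : Fin (d + 1) => ((a + i + j)! : ℝ)) := by
  have h_det : Matrix.det (Matrix.of fun i j : Fin (d + 1) => ((a + i + j)! : ℝ)) =
      (∏ i ∈ Finset.range (d + 1), ((a + i)! : ℝ)) *
        (∏ i ∈ Finset.range (d + 1), (i ! : ℝ)) := by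
    rw [det_of_factorial_add_add, Fin.prod_univ_eq_prod_range (fun i => ((a + i)! : ℝ)),
      ← prod_range_succ_factorial]
    push_cast
    rfl
  refine ⟨h_det, h_det ▸ ?_⟩
  positivity
end

section
/- The matrix (G_{m,n})_{m,n=0,...,N} with G_{m,n} = C·t^{m+n+3}·(m+n+2)! for constants C > 0 and t > 0 is positive definite. -/
open Nat Matrix

/-!
`G` is `C` times the Hankel moment matrix of the weight `x ^ 2 * exp (-x / t)` on `(0, ∞)`,
because `∫₀^∞ x ^ k * exp (-x / t) dx = t ^ (k + 1) * k!`. Hence `vᵀ G v` equals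
`C * ∫₀^∞ p(x) ^ 2 * x ^ 2 * exp (-x / t) dx` with `p = ∑ vₘ xᵐ`, which is positive unless `p = 0`,
since a nonzero polynomial vanishes only on a finite, hence null, set.
-/

open MeasureTheory Set Polynomial Real

theorem integral_pow_mul_exp_neg_div_Ioi {t : ℝ} (ht : 0 < t) (k : ℕ) :
    ∫ x in Ioi 0, x ^ k * exp (-(x / t)) = t ^ (k + 1) * k ! := by
  have h := integral_rpow_mul_exp_neg_mul_Ioi (a := k + 1) (by positivity) (inv_pos.2 ht)
  simp only [add_sub_cancel_right, rpow_natCast, one_div, inv_inv, ← div_eq_inv_mul] at h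
  rw [h, Gamma_nat_eq_factorial, ← Nat.cast_succ, rpow_natCast]

theorem integrableOn_pow_mul_exp_neg_div_Ioi {t : ℝ} (ht : 0 < t) (k : ℕ) :
    IntegrableOn (fun x => x ^ k * exp (-(x / t))) (Ioi 0) :=
  .of_integral_ne_zero <| by rw [integral_pow_mul_exp_neg_div_Ioi ht]; positivity

theorem Polynomial.eval_ofFn {R : Type*} [CommSemiring R] [DecidableEq R] {n : ℕ}
    (v : Fin n → R) (x : R) : (ofFn n v).eval x = ∑ i, v i * x ^ (i : ℕ) := by
  simp [ofFn_eq_sum_monomial, eval_finsetSum]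

theorem integral_pos_of_ae_pos {α : Type*} [MeasurableSpace α] {μ : Measure α} [NeZero μ]
    {f : α → ℝ} (hf : ∀ᵐ x ∂μ, 0 < f x) (hfi : Integrable f μ) : 0 < ∫ x, f x ∂μ := by
  rw [integral_pos_iff_support_of_nonneg_ae (hf.mono fun x hx => hx.le) hfi]
  have hsupp : Function.support f =ᵐ[μ] univ :=
    ae_eq_univ.2 (ae_iff.1 (hf.mono fun x hx => hx.ne'))
  rw [measure_congr hsupp]
  exact pos_iff_ne_zero.2 (NeZero.ne _)

noncomputable def momentMatrix (μ : Measure ℝ) (w : ℝ → ℝ) (n : ℕ) : Matrix (Fin n) (Fin n) ℝ :=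
  of fun i j => ∫ x, x ^ ((i : ℕ) + j) * w x ∂μ

section Moments

variable {μ : Measure ℝ} {w : ℝ → ℝ}

theorem integrable_eval_mul (hint : ∀ k : ℕ, Integrable (fun x => x ^ k * w x) μ) (p : ℝ[X]) :
    Integrable (fun x => p.eval x * w x) μ := by
  simp_rw [eval_eq_sum_range, Finset.sum_mul, mul_assoc]
  exact integrable_finsetSum _ fun k _ => (hint k).const_mul _

theorem sq_eval_ofFn_mul_eq_sum {n : ℕ} (v : Fin n → ℝ) (x : ℝ) :
    (ofFn n v).eval x ^ 2 * w x = ∑ i, ∑ j, v i * v j * (x ^ ((i : ℕ) + j) * w x) := by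
  rw [eval_ofFn, sq, Finset.sum_mul_sum, Finset.sum_mul]
  refine Finset.sum_congr rfl fun i _ => ?_
  rw [Finset.sum_mul]
  refine Finset.sum_congr rfl fun j _ => ?_
  rw [pow_add]
  ring

theorem dotProduct_momentMatrix_mulVec (hint : ∀ k : ℕ, Integrable (fun x => x ^ k * w x) μ)
    {n : ℕ} (v : Fin n → ℝ) :
    v ⬝ᵥ momentMatrix μ w n *ᵥ v = ∫ x, (ofFn n v).eval x ^ 2 * w x ∂μ := by
  simp_rw [sq_eval_ofFn_mul_eq_sum]
  rw [integral_finsetSum _ fun i _ => integrable_finsetSum _ fun j _ => (hint _).const_mul _]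
  simp only [dotProduct, mulVec, momentMatrix, of_apply, Finset.mul_sum]
  refine Finset.sum_congr rfl fun i _ => ?_
  rw [integral_finsetSum _ fun j _ => (hint _).const_mul _]
  refine Finset.sum_congr rfl fun j _ => ?_
  rw [integral_const_mul]
  ring

variable [NullSingletonClass μ] [NeZero μ]

theorem integral_sq_eval_mul_pos (hw : ∀ᵐ x ∂μ, 0 < w x)
    (hint : ∀ k : ℕ, Integrable (fun x => x ^ k * w x) μ) {p : ℝ[X]} (hp : p ≠ 0) :
    0 < ∫ x, p.eval x ^ 2 * w x ∂μ := by
  refine integral_pos_of_ae_pos ?_ ?_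
  · have hroots : ∀ᵐ x ∂μ, x ∉ {x | p.IsRoot x} :=
      (finite_setOfPred_isRoot hp).countable.ae_notMem μ
    filter_upwards [hw, hroots] with x hwx hx
    exact mul_pos (sq_pos_of_ne_zero hx) hwx
  · exact (integrable_eval_mul hint (p ^ 2)).congr (.of_forall fun x => by simp)

theorem posDef_momentMatrix (hw : ∀ᵐ x ∂μ, 0 < w x)
    (hint : ∀ k : ℕ, Integrable (fun x => x ^ k * w x) μ) (n : ℕ) :
    (momentMatrix μ w n).PosDef := by
  refine .of_dotProduct_mulVec_pos ?_ fun v hv => ?_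
  · ext i j
    simp [momentMatrix, add_comm]
  · rw [star_trivial, dotProduct_momentMatrix_mulVec hint]
    exact integral_sq_eval_mul_pos hw hint ((map_ne_zero_iff _ (injective_ofFn n)).2 hv)

end Moments

/-- The matrix `G_{m,n} = C t^{m+n+3} (m+n+2)!` for `C > 0`, `t > 0` is positive definite. -/
theorem G_matrix_posDef (N : ℕ) (C t : ℝ) (hC : 0 < C) (ht : 0 < t) :
    (Matrix.of fun m n : Fin (N + 1) =>
        C * t ^ ((m : ℕ) + n + 3) * (((m : ℕ) + n + 2)! : ℝ)).PosDef := by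
  set w : ℝ → ℝ := fun x => x ^ 2 * exp (-(x / t))
  have hmoment (k : ℕ) : ∫ x in Ioi 0, x ^ k * w x = t ^ (k + 3) * (k + 2)! := by
    simpa only [w, ← mul_assoc, ← pow_add] using integral_pow_mul_exp_neg_div_Ioi ht (k + 2)
  have hint (k : ℕ) : IntegrableOn (fun x => x ^ k * w x) (Ioi 0) := by
    simpa only [w, ← mul_assoc, ← pow_add] using integrableOn_pow_mul_exp_neg_div_Ioi ht (k + 2)
  have hw : ∀ᵐ x ∂volume.restrict (Ioi 0), 0 < w x :=
    (ae_restrict_mem measurableSet_Ioi).mono fun x (hx : 0 < x) => by positivity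
  have : NeZero (volume.restrict (Ioi (0 : ℝ))) := ⟨by simp⟩
  convert (posDef_momentMatrix hw hint (N + 1)).smul hC using 1
  ext m n
  simp only [Matrix.smul_apply, momentMatrix, of_apply, hmoment, smul_eq_mul]
  ring
end

section
/- Let 0 ≤ k ≤ 1 and U ∈ ℝ⁴ with -(U⁰)² + (U¹)² + (U²)² + (U³)² = -1, and suppose (U⁰)²(1-k)+k > 0. Then every real root λ of f(λ) = λ²[(U⁰)²(1-k)+k] - 2λ U⁰U¹(1-k) + (U¹)²(1-k) - k satisfies -1 ≤ λ ≤ 1. -/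
/-!
Write the wave-speed quadratic as `A λ² - 2 B λ + C`. Its values at `±1` are
`(1 - k) (U⁰ ∓ U¹)² ≥ 0`, and since `(U⁰)² - (U¹)² ≥ 1` for a unit timelike `U` one gets
`A ∓ B ≥ (1 + k) / 2 > 0`, so the vertex `B / A` lies strictly inside `(-1, 1)`. An upward
parabola that is nonnegative at both ends of an interval containing its vertex has no roots
outside that interval.
-/

section OrderedRing

variable {R : Type*} [CommRing R] [LinearOrder R] [IsStrictOrderedRing R]

theorem le_one_of_quadratic_eq_zero {a b c x : R} (ha : 0 ≤ a) (h₁ : 0 ≤ a + b + c)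
    (hvertex : 0 < 2 * a + b) (hx : a * x ^ 2 + b * x + c = 0) : x ≤ 1 := by
  by_contra! hx₁
  have hpos : 0 < a * x ^ 2 + b * x + c :=
    calc 0 < (a + b + c) + (x - 1) * (2 * a + b) + a * (x - 1) ^ 2 := by
          nlinarith [mul_pos (sub_pos.2 hx₁) hvertex, mul_nonneg ha (sq_nonneg (x - 1))]
      _ = a * x ^ 2 + b * x + c := by ring
  exact hpos.ne' hx

theorem quadratic_root_mem_Icc {a b c x : R} (ha : 0 ≤ a) (h₁ : 0 ≤ a + b + c)
    (hneg₁ : 0 ≤ a - b + c) (hvertex : 0 < 2 * a + b) (hvertex' : 0 < 2 * a - b)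
    (hx : a * x ^ 2 + b * x + c = 0) : x ∈ Set.Icc (-1) 1 := by
  refine ⟨?_, le_one_of_quadratic_eq_zero ha h₁ hvertex hx⟩
  have hnegx : a * (-x) ^ 2 + -b * -x + c = 0 := by linear_combination hx
  have := le_one_of_quadratic_eq_zero ha (by linarith) (by linarith) hnegx
  linarith

end OrderedRing

theorem half_le_mul_sub_of_one_le_sq_sub_sq {t x : ℝ} (h : 1 ≤ t ^ 2 - x ^ 2) :
    1 / 2 ≤ t * (t - x) := by
  nlinarith [sq_nonneg (t - x)]

theorem wave_speed_roots_le_one_general (k : ℝ) (hk0 : 0 ≤ k) (hk1 : k ≤ 1)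
    (U : Fin 4 → ℝ)
    (hU : -(U 0) ^ 2 + (U 1) ^ 2 + (U 2) ^ 2 + (U 3) ^ 2 = -1)
    (lam : ℝ)
    (hroot : lam ^ 2 * ((U 0) ^ 2 * (1 - k) + k) - 2 * lam * (U 0 * U 1 * (1 - k)) +
        (U 1) ^ 2 * (1 - k) - k = 0) :
    -1 ≤ lam ∧ lam ≤ 1 := by
  have hk : 0 ≤ 1 - k := sub_nonneg.2 hk1
  have htimelike : 1 ≤ U 0 ^ 2 - U 1 ^ 2 := by nlinarith [sq_nonneg (U 2), sq_nonneg (U 3)]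
  have hminus := half_le_mul_sub_of_one_le_sq_sub_sq htimelike
  have hplus := half_le_mul_sub_of_one_le_sq_sub_sq (t := U 0) (x := -U 1) (by rwa [neg_sq])
  refine quadratic_root_mem_Icc (a := U 0 ^ 2 * (1 - k) + k) (b := -2 * (U 0 * U 1 * (1 - k)))
    (c := U 1 ^ 2 * (1 - k) - k) (add_nonneg (mul_nonneg (sq_nonneg _) hk) hk0)
    ?_ ?_ ?_ ?_ (by linear_combination hroot)
  · nlinarith [mul_nonneg hk (sq_nonneg (U 0 - U 1))]
  · nlinarith [mul_nonneg hk (sq_nonneg (U 0 + U 1))]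
  · nlinarith [mul_le_mul_of_nonneg_left hminus hk]
  · nlinarith [mul_le_mul_of_nonneg_left hplus hk]

/-- Every real root of the wave-speed quadratic lies in `[-1, 1]`. -/
theorem wave_speed_roots_le_one (k : ℝ) (hk0 : 0 ≤ k) (hk1 : k ≤ 1)
    (U : Fin 4 → ℝ)
    (hU : -(U 0) ^ 2 + (U 1) ^ 2 + (U 2) ^ 2 + (U 3) ^ 2 = -1)
    (hA : 0 < (U 0) ^ 2 * (1 - k) + k) (lam : ℝ)
    (hroot : lam ^ 2 * ((U 0) ^ 2 * (1 - k) + k) - 2 * lam * (U 0 * U 1 * (1 - k)) +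
        (U 1) ^ 2 * (1 - k) - k = 0) :
    -1 ≤ lam ∧ lam ≤ 1 :=
  wave_speed_roots_le_one_general k hk0 hk1 U hU lam hroot
end

section
/- With the hypotheses of the wave-speed quadratic, (1/2)f'(1) = (1/2)(1-k)(U⁰ - U¹)² + (1/2)(1-k)[(U²)² + (U³)²] + (1/2)(1+k) > 0 and (1/2)f'(-1) = -(1/2)(1-k)(U⁰ + U¹)² - (1/2)(1-k)[(U²)² + (U³)²] - (1/2)(1+k) < 0. -/
/- With `a = (U⁰)²(1-k)+k` and `b = U⁰U¹(1-k)`, the values `(1/2)f'(±1) = ±a - b` are rewritten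
using the mass-shell relation `(U⁰)² = 1 + (U¹)² + (U²)² + (U³)²`; their signs then follow from
`0 ≤ 1 - k` and `0 < 1 + k`. -/

theorem hasDerivAt_sq_mul_sub_two_mul_mul_add {𝕜 : Type*} [NontriviallyNormedField 𝕜]
    (a b c x : 𝕜) : HasDerivAt (fun t => t ^ 2 * a - 2 * t * b + c) (2 * (x * a - b)) x := by
  refine ((((hasDerivAt_pow 2 x).mul_const a).sub
    (((hasDerivAt_id x).const_mul 2).mul_const b)).add_const c).congr_deriv ?_
  push_cast
  ring

/-- Derivative of the wave-speed quadratic at `±1`: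
`(1/2)f'(1) = (1/2)(1-k)(U⁰-U¹)² + (1/2)(1-k)[(U²)²+(U³)²] + (1/2)(1+k) > 0` and
`(1/2)f'(-1) = -(1/2)(1-k)(U⁰+U¹)² - (1/2)(1-k)[(U²)²+(U³)²] - (1/2)(1+k) < 0`. -/
theorem wave_speed_deriv_at_pm_one (k : ℝ) (hk0 : 0 ≤ k) (hk1 : k ≤ 1)
    (U : Fin 4 → ℝ)
    (hU : -(U 0) ^ 2 + (U 1) ^ 2 + (U 2) ^ 2 + (U 3) ^ 2 = -1)
    (f : ℝ → ℝ)
    (hf : ∀ lam, f lam = lam ^ 2 * ((U 0) ^ 2 * (1 - k) + k) -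
        2 * lam * (U 0 * U 1 * (1 - k)) + (U 1) ^ 2 * (1 - k) - k) :
    ((1 / 2) * deriv f 1 =
        (1 / 2) * (1 - k) * (U 0 - U 1) ^ 2 +
          (1 / 2) * (1 - k) * ((U 2) ^ 2 + (U 3) ^ 2) + (1 / 2) * (1 + k) ∧
      0 < (1 / 2) * deriv f 1) ∧
    ((1 / 2) * deriv f (-1) =
        -((1 / 2) * (1 - k) * (U 0 + U 1) ^ 2) -
          (1 / 2) * (1 - k) * ((U 2) ^ 2 + (U 3) ^ 2) - (1 / 2) * (1 + k) ∧
      (1 / 2) * deriv f (-1) < 0) := by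
  have half_deriv : ∀ x, (1 / 2) * deriv f x =
      x * ((U 0) ^ 2 * (1 - k) + k) - U 0 * U 1 * (1 - k) := by
    intro x
    have hf_eq : f = fun t => t ^ 2 * ((U 0) ^ 2 * (1 - k) + k) -
        2 * t * (U 0 * U 1 * (1 - k)) + ((U 1) ^ 2 * (1 - k) - k) := by
      funext t
      rw [hf]
      ring
    rw [hf_eq, (hasDerivAt_sq_mul_sub_two_mul_mul_add _ _ _ x).deriv]
    ring
  have at_one : (1 / 2) * deriv f 1 = (1 / 2) * (1 - k) * (U 0 - U 1) ^ 2 +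
      (1 / 2) * (1 - k) * ((U 2) ^ 2 + (U 3) ^ 2) + (1 / 2) * (1 + k) := by
    rw [half_deriv]
    linear_combination (-(1 / 2) * (1 - k)) * hU
  have at_neg_one : (1 / 2) * deriv f (-1) = -((1 / 2) * (1 - k) * (U 0 + U 1) ^ 2) -
      (1 / 2) * (1 - k) * ((U 2) ^ 2 + (U 3) ^ 2) - (1 / 2) * (1 + k) := by
    rw [half_deriv]
    linear_combination ((1 / 2) * (1 - k)) * hU
  have hk : 0 ≤ 1 - k := sub_nonneg.2 hk1
  have spatial : 0 ≤ (1 - k) * ((U 2) ^ 2 + (U 3) ^ 2) := mul_nonneg hk (by positivity)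
  refine ⟨⟨at_one, ?_⟩, at_neg_one, ?_⟩
  · rw [at_one]
    linarith [mul_nonneg hk (sq_nonneg (U 0 - U 1))]
  · rw [at_neg_one]
    linarith [mul_nonneg hk (sq_nonneg (U 0 + U 1))]
end
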